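/- arXiv:2202.05192 — 2 statements merged into one kernel-verified Lean document; each statement's English description precedes it below -/
import Mathlib

section
/- Let y be a von Mises–Fisher random vector on S_p with parameters (κ_y, μ_y) and let z be uniformly distributed on S_p, and let α ∈ (0,1)∪(1,∞). Then the Rényi divergence of order α of y from z equals d_α(y,z) = (ν/(α−1))·ln(2^{1−α}/(α·κ_y^{1−α})) + (α/(α−1))·ln(I_ν(ακ_y)/I_ν(κ_y)) − ln(I_ν(ακ_y)·Γ(ν+1)). -/
open MeasureTheory Real
open scoped RealInnerProductSpace

/-- `ν = p/2 − 1`. -/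
noncomputable def nuOf (p : ℕ) : ℝ := (p : ℝ) / 2 - 1

/-- The modified Bessel function of the first kind,
`I_ν(z) = (z/2)^ν ∑_{k=0}^∞ (z/2)^{2k}/(k!·Γ(ν+k+1))`. -/
noncomputable def besselI (ν z : ℝ) : ℝ :=
  (z / 2) ^ ν * ∑' k : ℕ, (z / 2) ^ (2 * k) / (Nat.factorial k * Real.Gamma (ν + k + 1))

/-- The ratio of modified Bessel functions `r_ν(κ) = I_{ν+1}(κ)/I_ν(κ)`. -/
noncomputable def besselRatio (ν κ : ℝ) : ℝ := besselI (ν + 1) κ / besselI ν κ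

/-- The standard surface measure on the unit sphere in `ℝ^p`. -/
noncomputable def sphereMeasure (p : ℕ) :
    Measure (Metric.sphere (0 : EuclideanSpace ℝ (Fin p)) 1) :=
  (volume : Measure (EuclideanSpace ℝ (Fin p))).toSphere

/-- The von Mises–Fisher partition function `C_ν(κ) = (2π)^{ν+1} I_ν(κ)/κ^ν`. -/
noncomputable def vmfC (ν κ : ℝ) : ℝ := (2 * Real.pi) ^ (ν + 1) * besselI ν κ / κ ^ ν

/-- The von Mises–Fisher density `f_p(x;κ,μ) = exp(κ⟨μ,x⟩)/C_ν(κ)`. -/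
noncomputable def vmf (p : ℕ) (κ : ℝ) (μ x : EuclideanSpace ℝ (Fin p)) : ℝ :=
  Real.exp (κ * ⟪μ, x⟫) / vmfC (nuOf p) κ

/-- The uniform density on the unit sphere in `ℝ^p`, `u(x) = Γ(ν+1)/(2π^{ν+1})`. -/
noncomputable def uniformDensity (p : ℕ) : ℝ :=
  Real.Gamma (nuOf p + 1) / (2 * Real.pi ^ (nuOf p + 1))

/-- The Rényi divergence of order `α` of `f_p(·;κ_y,μ_y)` from the uniform
distribution on the sphere. -/
noncomputable def renyiDivUniform (p : ℕ) (α κy : ℝ) (μy : EuclideanSpace ℝ (Fin p)) : ℝ :=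
  (1 / (α - 1)) * Real.log (∫ x : Metric.sphere (0 : EuclideanSpace ℝ (Fin p)) 1,
      vmf p κy μy (x : EuclideanSpace ℝ (Fin p)) ^ α
        * uniformDensity p ^ (1 - α) ∂(sphereMeasure p))

open Set Metric MeasureTheory Measure
open scoped Nat

/-!
The integrand `f^α u^(1-α)` is a constant multiple of `exp (ακ ⟪μ, x⟫)`, so everything reduces to
the normalising integral `∫_S exp (c ⟪μ, ω⟫) dσ = C_ν(c)`. Expanding the exponential turns it into
a power series in `c` whose coefficients are the moments `∫_S ⟪μ, ω⟫^n dσ`. Each moment is read off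
the Gaussian integral `∫_{ℝ^p} ⟪μ, x⟫^n exp (-‖x‖²) dx`, evaluated twice: in polar coordinates it is
the moment times `Γ((n+p)/2)/2`, and after a reflection taking `μ` to a coordinate vector it is a
one-dimensional Gaussian moment times `√π^(p-1)`. The odd moments vanish and the even ones give
exactly the series of `I_ν`.
-/

lemma nuOf_add_one (p : ℕ) : nuOf p + 1 = p / 2 := by
  rw [nuOf]
  ring

lemma nuOf_nonneg {p : ℕ} (hp : 2 ≤ p) : 0 ≤ nuOf p := by
  have : (2 : ℝ) ≤ p := by exact_mod_cast hp
  rw [nuOf]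
  linarith

lemma Real.Gamma_add_one_le_Gamma_add_nat_add_one {ν : ℝ} (hν : 0 ≤ ν) (k : ℕ) :
    Gamma (ν + 1) ≤ Gamma (ν + k + 1) := by
  induction k with
  | zero => simp
  | succ k ih =>
    have hpos : 0 < ν + k + 1 := by positivity
    rw [Nat.cast_succ, ← add_assoc, Gamma_add_one hpos.ne']
    nlinarith [Gamma_pos_of_pos hpos]

lemma Real.Gamma_nat_add_half_mul (k : ℕ) :
    Gamma (k + 1 / 2) * (4 ^ k * k !) = √π * (2 * k)! := by
  have hfac : ((2 * k)! : ℝ) = (2 * k - 1)‼ * (2 ^ k * k !) := by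
    rcases k with _ | k
    · simp
    · rw [show 2 * (k + 1) = 2 * k + 1 + 1 by ring, Nat.factorial_eq_mul_doubleFactorial,
        show 2 * k + 1 + 1 = 2 * (k + 1) by ring, Nat.doubleFactorial_two_mul,
        show 2 * (k + 1) - 1 = 2 * k + 1 by omega]
      push_cast
      ring
  rw [Gamma_nat_add_half, hfac, show (4 : ℝ) ^ k = 2 ^ k * 2 ^ k by rw [← mul_pow]; norm_num]
  field_simp

section BesselSeries

variable {ν : ℝ}

lemma besselI_series_term_nonneg (hν : 0 ≤ ν) (z : ℝ) (k : ℕ) :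
    0 ≤ (z / 2) ^ (2 * k) / (k ! * Gamma (ν + k + 1)) := by
  have := Gamma_pos_of_pos (show 0 < ν + k + 1 by positivity)
  exact div_nonneg ((even_two_mul k).pow_nonneg _) (by positivity)

lemma summable_besselI_series (hν : 0 ≤ ν) (z : ℝ) :
    Summable fun k : ℕ ↦ (z / 2) ^ (2 * k) / (k ! * Gamma (ν + k + 1)) := by
  refine .of_nonneg_of_le (besselI_series_term_nonneg hν z) (fun k ↦ ?_)
    ((summable_pow_div_factorial ((z / 2) ^ 2)).div_const (Gamma (ν + 1)))
  have := Gamma_pos_of_pos (show 0 < ν + 1 by positivity)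
  rw [pow_mul, div_div]
  gcongr
  exact Gamma_add_one_le_Gamma_add_nat_add_one hν k

lemma besselI_pos (hν : 0 ≤ ν) {z : ℝ} (hz : 0 < z) : 0 < besselI ν z := by
  refine mul_pos (rpow_pos_of_pos (half_pos hz) ν) ?_
  refine (summable_besselI_series hν z).tsum_pos (besselI_series_term_nonneg hν z) 0 ?_
  simpa using Gamma_pos_of_pos (show 0 < ν + 1 by positivity)

lemma vmfC_eq_mul_tsum (ν : ℝ) {c : ℝ} (hc : 0 < c) :
    vmfC ν c = 2 * π ^ (ν + 1) * ∑' k : ℕ, (c / 2) ^ (2 * k) / (k ! * Gamma (ν + k + 1)) := by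
  have : 0 < c ^ ν := rpow_pos_of_pos hc ν
  have : 0 < (2 : ℝ) ^ ν := rpow_pos_of_pos two_pos ν
  rw [vmfC, besselI, mul_rpow two_pos.le pi_pos.le, div_rpow hc.le two_pos.le,
    rpow_add_one two_ne_zero]
  field_simp

lemma vmfC_pos (hν : 0 ≤ ν) {κ : ℝ} (hκ : 0 < κ) : 0 < vmfC ν κ := by
  have := besselI_pos hν hκ
  unfold vmfC
  positivity

lemma log_vmfC (hν : 0 ≤ ν) {κ : ℝ} (hκ : 0 < κ) :
    log (vmfC ν κ) = (ν + 1) * log (2 * π) + log (besselI ν κ) - ν * log κ := by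
  have := besselI_pos hν hκ
  rw [vmfC, log_div (by positivity) (by positivity), log_mul (by positivity) this.ne',
    log_rpow (by positivity), log_rpow hκ]

end BesselSeries

lemma integral_Ioi_pow_mul_exp_neg_sq (n : ℕ) :
    ∫ r in Ioi (0 : ℝ), r ^ n * exp (-r ^ 2) = Gamma ((n + 1) / 2) / 2 := by
  have h := integral_rpow_mul_exp_neg_rpow two_pos
    (neg_one_lt_zero.trans_le (Nat.cast_nonneg n))
  simp only [rpow_natCast, rpow_two] at h
  rw [h, one_div_mul_eq_div]

lemma integral_volumeIoiPow_pow_mul_exp_neg_sq (n m : ℕ) :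
    ∫ r : Ioi (0 : ℝ), (r : ℝ) ^ n * exp (-(r : ℝ) ^ 2) ∂volumeIoiPow m
      = Gamma ((n + m + 1) / 2) / 2 := by
  simp only [volumeIoiPow, ENNReal.ofReal]
  rw [integral_withDensity_eq_integral_smul (measurable_subtype_coe.pow_const _).real_toNNReal,
    integral_subtype_comap measurableSet_Ioi
      (fun r : ℝ ↦ (r ^ m).toNNReal • (r ^ n * exp (-r ^ 2))),
    ← Nat.cast_add, ← integral_Ioi_pow_mul_exp_neg_sq]
  refine setIntegral_congr_fun measurableSet_Ioi fun r (hr : 0 < r) ↦ ?_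
  rw [NNReal.smul_def, Real.coe_toNNReal _ (by positivity), smul_eq_mul]
  ring

lemma integral_pow_two_mul_mul_exp_neg_sq (k : ℕ) :
    ∫ x : ℝ, x ^ (2 * k) * exp (-x ^ 2) = Gamma (k + 1 / 2) := by
  have habs (x : ℝ) : |x| ^ (2 * k) * exp (-|x| ^ 2) = x ^ (2 * k) * exp (-x ^ 2) := by
    rw [(even_two_mul k).pow_abs, sq_abs]
  rw [← integral_congr_ae (.of_forall habs),
    integral_comp_abs (f := fun x ↦ x ^ (2 * k) * exp (-x ^ 2)), integral_Ioi_pow_mul_exp_neg_sq]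
  push_cast
  ring_nf

lemma integral_pow_two_mul_add_one_mul_exp_neg_sq (k : ℕ) :
    ∫ x : ℝ, x ^ (2 * k + 1) * exp (-x ^ 2) = 0 := by
  have hodd (x : ℝ) :
      (-x) ^ (2 * k + 1) * exp (-(-x) ^ 2) = -(x ^ (2 * k + 1) * exp (-x ^ 2)) := by
    rw [(odd_two_mul_add_one k).neg_pow, neg_sq, neg_mul]
  have h := integral_neg_eq_self (fun x : ℝ ↦ x ^ (2 * k + 1) * exp (-x ^ 2)) volume
  rw [integral_congr_ae (.of_forall hodd), integral_neg] at h
  linarith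

lemma integral_exp_eq_tsum_integral_pow_div_factorial {α : Type*} [MeasurableSpace α]
    {μ : Measure α} [IsFiniteMeasure μ] {f : α → ℝ} (hf : AEStronglyMeasurable f μ) {C : ℝ}
    (hC : ∀ᵐ x ∂μ, |f x| ≤ C) :
    ∫ x, exp (f x) ∂μ = ∑' n : ℕ, (∫ x, f x ^ n ∂μ) / n ! := by
  have hbound (n : ℕ) : ∀ᵐ x ∂μ, ‖f x ^ n / (n ! : ℝ)‖ ≤ C ^ n / n ! := by
    filter_upwards [hC] with x hx
    rw [norm_div, norm_pow, Real.norm_eq_abs, RCLike.norm_natCast]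
    gcongr
  have hint (n : ℕ) : Integrable (fun x ↦ f x ^ n / n !) μ :=
    .of_bound (by fun_prop) _ (hbound n)
  simp_rw [← integral_div]
  rw [integral_tsum_of_summable_integral_norm hint]
  · simp_rw [exp_eq_exp_ℝ, NormedSpace.exp_eq_tsum_div]
  · refine .of_nonneg_of_le (fun n ↦ integral_nonneg fun _ ↦ norm_nonneg _) (fun n ↦ ?_)
      ((summable_pow_div_factorial C).mul_right (μ.real univ))
    refine (integral_mono_ae (hint n).norm (integrable_const _) (hbound n)).trans_eq ?_
    rw [integral_const, smul_eq_mul, mul_comm]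

section PolarCoordinates

variable {E : Type*} [NormedAddCommGroup E] [NormedSpace ℝ E] [FiniteDimensional ℝ E]
  [MeasurableSpace E] [BorelSpace E] [Nontrivial E] (μ : Measure E) [μ.IsAddHaarMeasure]

lemma integral_eq_integral_sphere_prod_volumeIoiPow {F : Type*} [NormedAddCommGroup F]
    [NormedSpace ℝ F] (f : E → F) :
    ∫ x, f x ∂μ = ∫ z, f ((z.2 : ℝ) • (z.1 : E))
      ∂(μ.toSphere.prod (volumeIoiPow (Module.finrank ℝ E - 1))) := by
  calc ∫ x, f x ∂μ = ∫ x : ({0}ᶜ : Set E), f x ∂(μ.comap (↑)) := by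
        rw [integral_subtype_comap (measurableSet_singleton _).compl, restrict_compl_singleton]
    _ = _ := by
      rw [← μ.measurePreserving_homeomorphUnitSphereProd.integral_comp
        (Homeomorph.measurableEmbedding _)]
      refine integral_congr_ae (.of_forall fun x ↦ ?_)
      simp only [homeomorphUnitSphereProd_apply_fst_coe, homeomorphUnitSphereProd_apply_snd_coe]
      rw [smul_inv_smul₀ (norm_ne_zero_iff.2 x.2)]

lemma integral_mul_exp_neg_norm_sq_of_homogeneous {f : E → ℝ} {n : ℕ}
    (hf : ∀ x : E, ∀ r : ℝ, 0 < r → f (r • x) = r ^ n * f x) :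
    ∫ x, f x * exp (-‖x‖ ^ 2) ∂μ
      = (∫ ω, f ω ∂μ.toSphere) * (Gamma ((n + Module.finrank ℝ E) / 2) / 2) := by
  have hpolar (z : sphere (0 : E) 1 × Ioi (0 : ℝ)) :
      f ((z.2 : ℝ) • (z.1 : E)) * exp (-‖(z.2 : ℝ) • (z.1 : E)‖ ^ 2)
        = f z.1 * ((z.2 : ℝ) ^ n * exp (-(z.2 : ℝ) ^ 2)) := by
    rw [hf _ _ z.2.2, norm_smul, norm_eq_of_mem_sphere z.1, mul_one, norm_of_nonneg z.2.2.out.le]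
    ring
  have hdim : ((Module.finrank ℝ E - 1 : ℕ) : ℝ) + 1 = Module.finrank ℝ E := by
    rw [Nat.cast_pred Module.finrank_pos, sub_add_cancel]
  rw [integral_eq_integral_sphere_prod_volumeIoiPow, integral_congr_ae (.of_forall hpolar),
    integral_prod_mul (fun ω : sphere (0 : E) 1 ↦ f ω)
      (fun r : Ioi (0 : ℝ) ↦ (r : ℝ) ^ n * exp (-(r : ℝ) ^ 2)),
    integral_volumeIoiPow_pow_mul_exp_neg_sq, add_assoc, hdim]

end PolarCoordinates

section EuclideanSpace

variable {p : ℕ} {μ : EuclideanSpace ℝ (Fin p)}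

lemma integral_comp_apply_mul_exp_neg_norm_sq (i : Fin p) (g : ℝ → ℝ) :
    ∫ y : EuclideanSpace ℝ (Fin p), g (y i) * exp (-‖y‖ ^ 2)
      = (∫ t, g t * exp (-t ^ 2)) * √π ^ (p - 1) := by
  have hprod (y : Fin p → ℝ) : g (y i) * exp (-∑ j, y j ^ 2)
      = ∏ j, (if j = i then g (y j) else 1) * exp (-y j ^ 2) := by
    rw [Finset.prod_mul_distrib, Finset.prod_ite_eq' Finset.univ i, if_pos (Finset.mem_univ i),
      ← exp_sum, Finset.sum_neg_distrib]
  have hfactor (j : Fin p) : ∫ t, (if j = i then g t else 1) * exp (-t ^ 2)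
      = if j = i then ∫ t, g t * exp (-t ^ 2) else √π := by
    split_ifs
    · rfl
    · simpa using integral_gaussian 1
  rw [← (PiLp.volume_preserving_toLp (Fin p)).integral_comp
    (MeasurableEquiv.toLp 2 (Fin p → ℝ)).measurableEmbedding]
  simp only [EuclideanSpace.norm_sq_eq, Real.norm_eq_abs, sq_abs, hprod]
  rw [integral_fintype_prod_volume_eq_prod fun j t ↦ (if j = i then g t else 1) * exp (-t ^ 2),
    Finset.prod_congr rfl fun j _ ↦ hfactor j]
  simp [Finset.prod_ite, Finset.filter_ne', Finset.filter_eq']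

lemma EuclideanSpace.pos_of_norm_eq_one (hμ : ‖μ‖ = 1) : 0 < p := by
  rw [Nat.pos_iff_ne_zero]
  rintro rfl
  simp [Subsingleton.elim μ 0] at hμ

lemma integral_comp_inner_mul_exp_neg_norm_sq (hμ : ‖μ‖ = 1) (g : ℝ → ℝ) :
    ∫ x : EuclideanSpace ℝ (Fin p), g ⟪μ, x⟫ * exp (-‖x‖ ^ 2)
      = (∫ t, g t * exp (-t ^ 2)) * √π ^ (p - 1) := by
  let i : Fin p := ⟨0, EuclideanSpace.pos_of_norm_eq_one hμ⟩
  let R := (ℝ ∙ (μ - EuclideanSpace.single i 1))ᗮ.reflection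
  have hRμ : R μ = EuclideanSpace.single i 1 := Submodule.reflection_sub (by simp [hμ])
  have hinner (y : EuclideanSpace ℝ (Fin p)) : ⟪μ, R y⟫ = y i := by
    rw [← R.inner_map_map, hRμ, Submodule.reflection_reflection, EuclideanSpace.inner_single_left]
    simp
  rw [← integral_comp_apply_mul_exp_neg_norm_sq i g,
    ← R.measurePreserving.integral_comp R.toHomeomorph.measurableEmbedding]
  simp only [hinner, LinearIsometryEquiv.norm_map]

lemma integral_sphere_inner_pow_mul_Gamma (hμ : ‖μ‖ = 1) (n : ℕ) :
    (∫ ω, ⟪μ, ω⟫ ^ n ∂sphereMeasure p) * (Gamma ((n + p) / 2) / 2)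
      = (∫ t, t ^ n * exp (-t ^ 2)) * √π ^ (p - 1) := by
  have : Nontrivial (EuclideanSpace ℝ (Fin p)) :=
    nontrivial_of_ne μ 0 (ne_zero_of_norm_ne_zero (by simp [hμ]))
  have h := integral_mul_exp_neg_norm_sq_of_homogeneous volume (f := fun x ↦ ⟪μ, x⟫ ^ n)
    fun x r _ ↦ by rw [inner_smul_right, mul_pow]
  rw [finrank_euclideanSpace_fin, integral_comp_inner_mul_exp_neg_norm_sq hμ (· ^ n)] at h
  exact h.symm

lemma integral_sphere_inner_pow_two_mul_add_one (hμ : ‖μ‖ = 1) (k : ℕ) :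
    ∫ ω, ⟪μ, ω⟫ ^ (2 * k + 1) ∂sphereMeasure p = 0 := by
  have h := integral_sphere_inner_pow_mul_Gamma hμ (2 * k + 1)
  rw [integral_pow_two_mul_add_one_mul_exp_neg_sq, zero_mul] at h
  have := Gamma_pos_of_pos (show 0 < ((2 * k + 1 : ℕ) + p : ℝ) / 2 by positivity)
  exact (mul_eq_zero.1 h).resolve_right (by positivity)

lemma integral_sphere_inner_pow_two_mul (hμ : ‖μ‖ = 1) (k : ℕ) :
    ∫ ω, ⟪μ, ω⟫ ^ (2 * k) ∂sphereMeasure p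
      = 2 * π ^ (nuOf p + 1) * (2 * k)! / (4 ^ k * k ! * Gamma (nuOf p + k + 1)) := by
  have hp : 0 < p := EuclideanSpace.pos_of_norm_eq_one hμ
  have h := integral_sphere_inner_pow_mul_Gamma hμ (2 * k)
  have hΓ : ((2 * k : ℕ) + p : ℝ) / 2 = nuOf p + k + 1 := by
    rw [nuOf]; push_cast; ring
  have hπ : √π ^ (p - 1) * √π = π ^ (nuOf p + 1) := by
    rw [← pow_succ, Nat.sub_add_cancel hp, sqrt_eq_rpow, ← rpow_natCast, ← rpow_mul pi_pos.le,
      nuOf_add_one]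
    ring_nf
  rw [integral_pow_two_mul_mul_exp_neg_sq, hΓ] at h
  have := Gamma_pos_of_pos (show 0 < nuOf p + k + 1 by rw [← hΓ]; positivity)
  rw [eq_div_iff (by positivity)]
  linear_combination (2 * 4 ^ k * k !) * h + 2 * √π ^ (p - 1) * Gamma_nat_add_half_mul k
    + 2 * (2 * k)! * hπ

instance : IsFiniteMeasure (sphereMeasure p) := by
  rw [sphereMeasure]
  infer_instance

theorem integral_sphere_exp_mul_inner (hp : 2 ≤ p) (hμ : ‖μ‖ = 1) {c : ℝ} (hc : 0 < c) :
    ∫ ω, exp (c * ⟪μ, ω⟫) ∂sphereMeasure p = vmfC (nuOf p) c := by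
  have hbound : ∀ᵐ ω : sphere (0 : EuclideanSpace ℝ (Fin p)) 1 ∂sphereMeasure p,
      |c * ⟪μ, ω⟫| ≤ c :=
    .of_forall fun ω ↦ by
      rw [abs_mul, abs_of_pos hc]
      refine mul_le_of_le_one_right hc.le ((abs_real_inner_le_norm _ _).trans ?_)
      rw [hμ, norm_eq_of_mem_sphere ω, one_mul]
  have hterm (n : ℕ) : (∫ ω, (c * ⟪μ, ω⟫) ^ n ∂sphereMeasure p) / n !
      = c ^ n * (∫ ω, ⟪μ, ω⟫ ^ n ∂sphereMeasure p) / n ! := by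
    simp_rw [mul_pow, integral_const_mul]
  have heven (k : ℕ) :
      c ^ (2 * k) * (∫ ω, ⟪μ, ω⟫ ^ (2 * k) ∂sphereMeasure p) / (2 * k)!
        = 2 * π ^ (nuOf p + 1) * ((c / 2) ^ (2 * k) / (k ! * Gamma (nuOf p + k + 1))) := by
    have := Gamma_pos_of_pos (show 0 < nuOf p + k + 1 by linarith [nuOf_nonneg hp])
    rw [integral_sphere_inner_pow_two_mul hμ, div_pow, pow_mul 2, show (2 : ℝ) ^ 2 = 4 by norm_num]
    field_simp
  have hodd (k : ℕ) :
      c ^ (2 * k + 1) * (∫ ω, ⟪μ, ω⟫ ^ (2 * k + 1) ∂sphereMeasure p)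
        / (2 * k + 1)! = 0 := by
    rw [integral_sphere_inner_pow_two_mul_add_one hμ, mul_zero, zero_div]
  have hsummable := (summable_besselI_series (nuOf_nonneg hp) c).mul_left (2 * π ^ (nuOf p + 1))
  rw [integral_exp_eq_tsum_integral_pow_div_factorial (by fun_prop) hbound, vmfC_eq_mul_tsum _ hc,
    ← tsum_mul_left]
  simp_rw [hterm]
  rw [← tsum_even_add_odd (by simpa only [heven] using hsummable)
    (by simp only [hodd]; exact summable_zero)]
  simp only [heven, hodd, tsum_zero, add_zero]

lemma uniformDensity_pos (hp : 0 < p) : 0 < uniformDensity p := by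
  have := Gamma_pos_of_pos (show 0 < nuOf p + 1 by rw [nuOf_add_one]; positivity)
  rw [uniformDensity]
  positivity

lemma log_uniformDensity (hp : 0 < p) :
    log (uniformDensity p) = log (Gamma (nuOf p + 1)) - log 2 - (nuOf p + 1) * log π := by
  have := Gamma_pos_of_pos (show 0 < nuOf p + 1 by rw [nuOf_add_one]; positivity)
  rw [uniformDensity, log_div this.ne' (by positivity), log_mul two_ne_zero (by positivity),
    log_rpow pi_pos]
  ring

lemma integral_vmf_rpow_mul_uniformDensity_rpow (hp : 2 ≤ p)
    (hμ : ‖μ‖ = 1) {α κ : ℝ} (hα : 0 < α) (hκ : 0 < κ) :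
    ∫ x : sphere (0 : EuclideanSpace ℝ (Fin p)) 1,
        vmf p κ μ x ^ α * uniformDensity p ^ (1 - α) ∂sphereMeasure p
      = uniformDensity p ^ (1 - α) / vmfC (nuOf p) κ ^ α * vmfC (nuOf p) (α * κ) := by
  have hC := vmfC_pos (nuOf_nonneg hp) hκ
  have hpt (x : EuclideanSpace ℝ (Fin p)) : vmf p κ μ x ^ α * uniformDensity p ^ (1 - α)
      = uniformDensity p ^ (1 - α) / vmfC (nuOf p) κ ^ α * exp (α * κ * ⟪μ, x⟫) := by
    rw [vmf, div_rpow (exp_pos _).le hC.le, ← exp_mul, mul_comm _ α, ← mul_assoc]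
    ring
  simp_rw [hpt, integral_const_mul, integral_sphere_exp_mul_inner hp hμ (mul_pos hα hκ)]

end EuclideanSpace

/-- Rényi divergence of a von Mises–Fisher distribution from the uniform
distribution on the sphere. -/
theorem renyi_divergence_vmf_uniform (p : ℕ) (hp : 2 ≤ p) (α : ℝ) (hα : 0 < α) (hα1 : α ≠ 1)
    (κy : ℝ) (hκy : 0 < κy)
    (μy : EuclideanSpace ℝ (Fin p)) (hμy : ‖μy‖ = 1) :
    renyiDivUniform p α κy μy
      = nuOf p / (α - 1) * Real.log (2 ^ (1 - α) / (α * κy ^ (1 - α)))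
        + α / (α - 1) * Real.log (besselI (nuOf p) (α * κy) / besselI (nuOf p) κy)
        - Real.log (besselI (nuOf p) (α * κy) * Real.Gamma (nuOf p + 1)) := by
  have hν := nuOf_nonneg hp
  have hακ := mul_pos hα hκy
  have hu := uniformDensity_pos (p := p) (by omega)
  have hC := vmfC_pos hν hκy
  have hCα := vmfC_pos hν hακ
  have hI := besselI_pos hν hκy
  have hIα := besselI_pos hν hακ
  have hΓ : 0 < Gamma (nuOf p + 1) := Gamma_pos_of_pos (by linarith)
  have hα1' : α - 1 ≠ 0 := sub_ne_zero.2 hα1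
  rw [renyiDivUniform, integral_vmf_rpow_mul_uniformDensity_rpow hp hμy hα hκy,
    log_mul (by positivity) hCα.ne', log_div (by positivity) (by positivity), log_rpow hu,
    log_rpow hC, log_uniformDensity (by omega), log_vmfC hν hκy, log_vmfC hν hακ,
    log_mul hα.ne' hκy.ne', log_div (by positivity) (by positivity),
    log_mul hα.ne' (by positivity), log_rpow two_pos, log_rpow hκy, log_div hIα.ne' hI.ne',
    log_mul hIα.ne' hΓ.ne', log_mul two_ne_zero pi_ne_zero]
  field_simp
  ring
end

section
/- Let y and z be von Mises–Fisher random vectors on S_p with parameters (κ_y, μ_y) and (κ_z, μ_z) satisfying ‖(κ_y/2)μ_y + (κ_z/2)μ_z‖₂ = 0 (equivalently κ_z = κ_y and μ_z = −μ_y). Then the squared-Hellinger distance between y and z equals d_h(y,z)² = 2·(1 − (κ_y^ν/2^ν)/(I_ν(κ_y)·Γ(ν+1))). -/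
/-!
If `κ_y μ_y + κ_z μ_z = 0` the exponents of the two densities cancel, and since `μ_y, μ_z` are unit
vectors this forces `κ_z = κ_y`; so `√(f_y f_z)` is the constant `1 / C_ν(κ_y)`. The Bhattacharyya
coefficient is then `σ(S_p) / C_ν(κ_y)`, where `σ(S_p) = p · vol(B_p) = 2 π^{ν+1} / Γ(ν+1)`.
-/

open MeasureTheory Real
open scoped RealInnerProductSpace

/-- The squared-Hellinger distance between `f_p(·;κ_y,μ_y)` and `f_p(·;κ_z,μ_z)`. -/
noncomputable def hellingerSq (p : ℕ) (κy κz : ℝ) (μy μz : EuclideanSpace ℝ (Fin p)) : ℝ :=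
  2 * (1 - ∫ x : Metric.sphere (0 : EuclideanSpace ℝ (Fin p)) 1,
      (vmf p κy μy (x : EuclideanSpace ℝ (Fin p))
        * vmf p κz μz (x : EuclideanSpace ℝ (Fin p))) ^ ((1 : ℝ) / 2) ∂(sphereMeasure p))

namespace InnerProductSpace

open Module

theorem volume_toSphere_real_univ {E : Type*} [NormedAddCommGroup E] [InnerProductSpace ℝ E]
    [FiniteDimensional ℝ E] [MeasurableSpace E] [BorelSpace E] [Nontrivial E] :
    (volume : Measure E).toSphere.real Set.univ
      = 2 * π ^ ((finrank ℝ E : ℝ) / 2) / Gamma ((finrank ℝ E : ℝ) / 2) := by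
  have hd : (0 : ℝ) < finrank ℝ E := Nat.cast_pos.mpr finrank_pos
  rw [Measure.toSphere_real_apply_univ, measureReal_def, InnerProductSpace.volume_ball,
    ENNReal.ofReal_one, one_pow, one_mul, ENNReal.toReal_ofReal (by positivity),
    Real.sqrt_eq_rpow, ← Real.rpow_mul_natCast pi_pos.le, Gamma_add_one (by positivity)]
  field_simp

end InnerProductSpace

theorem sphereMeasure_real_univ {p : ℕ} (hp : 0 < p) :
    (sphereMeasure p).real Set.univ = 2 * π ^ (nuOf p + 1) / Gamma (nuOf p + 1) := by
  have : Nonempty (Fin p) := ⟨⟨0, hp⟩⟩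
  rw [sphereMeasure, InnerProductSpace.volume_toSphere_real_univ, finrank_euclideanSpace_fin,
    nuOf, sub_add_cancel]

theorem eq_of_smul_add_smul_eq_zero {E : Type*} [NormedAddCommGroup E] [NormedSpace ℝ E]
    {a b : ℝ} {u v : E} (ha : 0 ≤ a) (hb : 0 ≤ b) (hu : ‖u‖ = 1) (hv : ‖v‖ = 1)
    (h : a • u + b • v = 0) : a = b := by
  have := congrArg norm (eq_neg_of_add_eq_zero_left h)
  rwa [norm_neg, norm_smul, norm_smul, hu, hv, mul_one, mul_one, Real.norm_of_nonneg ha,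
    Real.norm_of_nonneg hb] at this

theorem neg_one_lt_nuOf {p : ℕ} (hp : 0 < p) : -1 < nuOf p := by
  have : (0 : ℝ) < p := Nat.cast_pos.mpr hp
  unfold nuOf
  linarith

theorem besselI_nonneg {ν z : ℝ} (hν : -1 < ν) (hz : 0 ≤ z) : 0 ≤ besselI ν z := by
  unfold besselI
  refine mul_nonneg (by positivity) (tsum_nonneg fun k => ?_)
  have hk : (0 : ℝ) ≤ k := k.cast_nonneg
  have : 0 < Gamma (ν + k + 1) := Gamma_pos_of_pos (by linarith)
  positivity

theorem vmfC_nonneg {ν κ : ℝ} (hν : -1 < ν) (hκ : 0 ≤ κ) : 0 ≤ vmfC ν κ := by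
  have := besselI_nonneg hν hκ
  unfold vmfC
  positivity

theorem vmf_mul_vmf (p : ℕ) (κy κz : ℝ) (μy μz x : EuclideanSpace ℝ (Fin p)) :
    vmf p κy μy x * vmf p κz μz x
      = exp (2 * ⟪(κy / 2) • μy + (κz / 2) • μz, x⟫) / (vmfC (nuOf p) κy * vmfC (nuOf p) κz) := by
  rw [vmf, vmf, div_mul_div_comm, ← exp_add, inner_add_left, real_inner_smul_left,
    real_inner_smul_left]
  ring_nf

theorem vmf_mul_vmf_rpow_half {p : ℕ} {κy κz : ℝ} (hy : 0 ≤ vmfC (nuOf p) κy)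
    (hz : 0 ≤ vmfC (nuOf p) κz) (μy μz x : EuclideanSpace ℝ (Fin p)) :
    (vmf p κy μy x * vmf p κz μz x) ^ ((1 : ℝ) / 2)
      = exp ⟪(κy / 2) • μy + (κz / 2) • μz, x⟫ / √(vmfC (nuOf p) κy * vmfC (nuOf p) κz) := by
  rw [vmf_mul_vmf, div_rpow (exp_pos _).le (mul_nonneg hy hz), ← exp_mul, sqrt_eq_rpow]
  ring_nf

theorem sphere_mass_div_vmfC (ν κ : ℝ) :
    2 * π ^ (ν + 1) / Gamma (ν + 1) / vmfC ν κ
      = κ ^ ν / 2 ^ ν / (besselI ν κ * Gamma (ν + 1)) := by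
  have hπ : π ^ (ν + 1) ≠ 0 := (rpow_pos_of_pos pi_pos _).ne'
  have h2 : (2 : ℝ) ^ ν ≠ 0 := (rpow_pos_of_pos two_pos _).ne'
  rw [vmfC, mul_rpow two_pos.le pi_pos.le, rpow_add_one two_ne_zero]
  field_simp

/-- Squared-Hellinger distance between two von Mises–Fisher distributions in
the special case `κ_h = 0`. -/
theorem hellinger_sq_vmf_degenerate (p : ℕ) (hp : 2 ≤ p)
    (κy κz : ℝ) (hκy : 0 < κy) (hκz : 0 < κz)
    (μy μz : EuclideanSpace ℝ (Fin p)) (hμy : ‖μy‖ = 1) (hμz : ‖μz‖ = 1)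
    (hκh : ‖(κy / 2) • μy + (κz / 2) • μz‖ = 0) :
    hellingerSq p κy κz μy μz
      = 2 * (1 - (κy ^ nuOf p / 2 ^ nuOf p)
          / (besselI (nuOf p) κy * Real.Gamma (nuOf p + 1))) := by
  have hzero : (κy / 2) • μy + (κz / 2) • μz = 0 := norm_eq_zero.mp hκh
  have hκ : κy = κz := by
    have := eq_of_smul_add_smul_eq_zero (by positivity) (by positivity) hμy hμz hzero
    linarith
  subst hκ
  have hC : 0 ≤ vmfC (nuOf p) κy := vmfC_nonneg (neg_one_lt_nuOf (by omega)) hκy.le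
  have hintegrand (x : Metric.sphere (0 : EuclideanSpace ℝ (Fin p)) 1) :
      (vmf p κy μy x * vmf p κy μz x) ^ ((1 : ℝ) / 2) = 1 / vmfC (nuOf p) κy := by
    rw [vmf_mul_vmf_rpow_half hC hC, hzero, inner_zero_left, exp_zero, sqrt_mul_self hC]
  rw [hellingerSq, integral_congr_ae (.of_forall hintegrand), integral_const, smul_eq_mul,
    sphereMeasure_real_univ (by omega), mul_one_div, sphere_mass_div_vmfC]
end
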